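/- Let Γ = m₁⁻¹ℤ × ⋯ × m_d⁻¹ℤ ⊂ ℝ^d and f : Γ → Y be ℤ^d-periodic with ‖Δ^{k+1} f‖_Γ < ∞. Then for every 1 ≤ m ≤ k+1, ‖Δ^m f‖_Γ ≤ d^{k+1−m} ‖Δ^{k+1} f‖_Γ, where ‖Δ^j f‖_Γ = sup over x ∈ Γ and nonzero u ∈ Γ^j of ‖Δ^j_u f(x)‖/(‖u₁‖⋯‖u_j‖). -/

import Mathlib

/-!
For `m ≥ 1` the function `g = Δ^m_u f` is `ℤ^d`-periodic with zero sum over the `N` points `t`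
of `Γ ∩ [0,1)^d` (it is a difference `Δ_{u₁}` of a periodic function), also after translating
them by `x ∈ Γ`. Hence `N • g x = -∑_t (g (x + t) - g x) = -∑_t Δ^{m+1}_{(t,u)} f x`, and
`‖t‖ ≤ d` gives `‖Δ^m f‖_Γ ≤ d ‖Δ^{m+1} f‖_Γ`. Descending induction on `m` finishes the proof.
-/

open Finset

/-- The lattice `Γ = m₁⁻¹ℤ × ⋯ × m_d⁻¹ℤ ⊂ ℝ^d`. -/
def lattice {d : ℕ} (m : Fin d → ℕ) : Set (Fin d → ℝ) :=
  {x | ∀ i, ∃ z : ℤ, x i = (z : ℝ) / (m i)}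

/-- The finite difference of order `j`:
`Δ^j_u f (x) = ∑_{α ∈ {0,1}^j} (-1)^{j-|α|} f (x + α·u)`. -/
def fdiff {X Y : Type*} [AddCommGroup X] [AddCommGroup Y] {j : ℕ}
    (u : Fin j → X) (f : X → Y) (x : X) : Y :=
  ∑ α : Fin j → Bool,
    ((-1 : ℤ) ^ (j - (Finset.univ.filter fun i => α i).card)) •
      f (x + ∑ i, if α i then u i else 0)

section FiniteDifference

variable {X Y : Type*} [AddCommGroup X] [AddCommGroup Y]

theorem fdiff_cons {m : ℕ} (v : X) (u : Fin m → X) (f : X → Y) (x : X) :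
    fdiff (Fin.cons v u) f x = fdiff u f (x + v) - fdiff u f x := by
  rw [fdiff, ← Equiv.sum_comp (Fin.consEquiv fun _ : Fin (m + 1) => Bool),
    Fintype.sum_prod_type, Fintype.sum_bool, fdiff, fdiff, sub_eq_add_neg, ← sum_neg_distrib,
    ← sum_add_distrib, ← sum_add_distrib]
  refine Finset.sum_congr rfl fun β _ => ?_
  have hle : (univ.filter fun i => β i).card ≤ m := (card_filter_le _ _).trans_eq (card_fin m)
  simp only [Fin.consEquiv_apply, Fin.sum_univ_succ, Fin.cons_zero, Fin.cons_succ, card_filter,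
    if_true, Bool.false_eq_true, if_false, zero_add] at hle ⊢
  generalize (∑ i, if β i = true then 1 else 0) = c at hle ⊢
  rw [show m + 1 - (1 + c) = m - c by omega, show m + 1 - c = m - c + 1 by omega, pow_succ,
    mul_neg_one, neg_smul, add_assoc]

theorem Function.Periodic.fdiff {m : ℕ} (u : Fin m → X) {f : X → Y} {a : X}
    (hf : Function.Periodic f a) : Function.Periodic (fdiff u f) a := fun x =>
  Finset.sum_congr rfl fun α _ => by rw [add_right_comm, hf]

end FiniteDifference

theorem ZMod.intCast_div_add_val_div {n : ℕ} [NeZero n] (z : ℤ) (a : ZMod n) :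
    (z : ℝ) / n + a.val / n = (a + z).val / n + ((a.val + z) / n : ℤ) := by
  have hval : ((a + z).val : ℤ) = (a.val + z) % n := by
    rw [← ZMod.val_intCast]
    push_cast
    simp [ZMod.natCast_val]
  have hdiv := congrArg (Int.cast : ℤ → ℝ) (Int.emod_add_mul_ediv (a.val + z) n)
  rw [← hval] at hdiv
  push_cast at hdiv
  have hn : (n : ℝ) ≠ 0 := Nat.cast_ne_zero.mpr (NeZero.ne n)
  rw [← add_div, div_add' _ _ _ hn, div_left_inj' hn]
  linarith

section Lattice

variable {d : ℕ} (mm : Fin d → ℕ)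

/-- The points of `lattice mm ∩ [0,1)^d`, indexed by `∀ i, ZMod (mm i)` so that translation by
a lattice point permutes them modulo `ℤ^d`. -/
noncomputable def cellPoint (t : ∀ i, ZMod (mm i)) : Fin d → ℝ :=
  fun i => (t i).val / mm i

theorem cellPoint_mem_lattice (t : ∀ i, ZMod (mm i)) : cellPoint mm t ∈ lattice mm :=
  fun i => ⟨(t i).val, by simp [cellPoint]⟩

variable [∀ i, NeZero (mm i)]

theorem sum_abs_cellPoint_le (t : ∀ i, ZMod (mm i)) : ∑ j, |cellPoint mm t j| ≤ d := by
  calc ∑ j, |cellPoint mm t j| ≤ ∑ _j : Fin d, (1 : ℝ) := by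
        refine sum_le_sum fun j _ => ?_
        rw [cellPoint, abs_of_nonneg (by positivity),
          div_le_one (Nat.cast_pos.mpr (NeZero.pos (mm j)))]
        exact_mod_cast (ZMod.val_lt (t j)).le
    _ = d := by simp

theorem exists_add_cellPoint_eq {x : Fin d → ℝ} (hx : x ∈ lattice mm) :
    ∃ w : ∀ i, ZMod (mm i), ∀ t, ∃ q : Fin d → ℤ,
      x + cellPoint mm t = cellPoint mm (t + w) + fun i => (q i : ℝ) := by
  choose z hz using hx
  refine ⟨fun i => z i, fun t => ⟨fun i => ((t i).val + z i) / mm i, funext fun i => ?_⟩⟩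
  simp only [Pi.add_apply, cellPoint, hz i]
  exact ZMod.intCast_div_add_val_div (z i) (t i)

variable {Y : Type*} [AddCommGroup Y]

theorem sum_add_cellPoint {g : (Fin d → ℝ) → Y}
    (hg : ∀ q : Fin d → ℤ, Function.Periodic g fun i => (q i : ℝ)) {x : Fin d → ℝ}
    (hx : x ∈ lattice mm) : ∑ t, g (x + cellPoint mm t) = ∑ t, g (cellPoint mm t) := by
  obtain ⟨w, hw⟩ := exists_add_cellPoint_eq mm hx
  calc ∑ t, g (x + cellPoint mm t) = ∑ t, g (cellPoint mm (t + w)) :=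
        Finset.sum_congr rfl fun t _ => by obtain ⟨q, hq⟩ := hw t; rw [hq, hg q]
    _ = ∑ t, g (cellPoint mm t) := Fintype.sum_equiv (Equiv.addRight w) _ _ fun _ => rfl

theorem sum_fdiff_add_cellPoint_eq_zero {f : (Fin d → ℝ) → Y}
    (hf : ∀ q : Fin d → ℤ, Function.Periodic f fun i => (q i : ℝ)) {m : ℕ}
    (u : Fin (m + 1) → Fin d → ℝ) (hu : ∀ i, u i ∈ lattice mm) {x : Fin d → ℝ}
    (hx : x ∈ lattice mm) : ∑ t, fdiff u f (x + cellPoint mm t) = 0 := by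
  have hg q := (hf q).fdiff (Fin.tail u)
  rw [sum_add_cellPoint mm (fun q => (hf q).fdiff u) hx, ← Fin.cons_self_tail u]
  simp only [fdiff_cons, sum_sub_distrib, add_comm _ (u 0),
    sum_add_cellPoint mm hg (hu 0), sub_self]

end Lattice

section Bounds

/-- `‖Δ^j f‖_Γ ≤ C`. -/
def FdiffBoundedBy {d : ℕ} {Y : Type*} [NormedAddCommGroup Y] (mm : Fin d → ℕ)
    (f : (Fin d → ℝ) → Y) (j : ℕ) (C : ℝ) : Prop :=
  ∀ u : Fin j → Fin d → ℝ, (∀ i, u i ∈ lattice mm) →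
    ∀ x ∈ lattice mm, ‖fdiff u f x‖ ≤ C * ∏ i, ∑ j, |u i j|

variable {d : ℕ} {Y : Type*} [NormedAddCommGroup Y] [NormedSpace ℝ Y] {mm : Fin d → ℕ}
  [∀ i, NeZero (mm i)] {f : (Fin d → ℝ) → Y}

theorem FdiffBoundedBy.of_succ (hf : ∀ q : Fin d → ℤ, Function.Periodic f fun i => (q i : ℝ))
    {m : ℕ} {B : ℝ} (hB : 0 ≤ B) (h : FdiffBoundedBy mm f (m + 2) B) :
    FdiffBoundedBy mm f (m + 1) (d * B) := by
  intro u hu x hx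
  set P := ∏ i, ∑ j, |u i j|
  set N := Fintype.card (∀ i, ZMod (mm i)) with hN
  have hsum : (N : ℝ) • fdiff u f x = -∑ t, fdiff (Fin.cons (cellPoint mm t) u) f x := by
    simp only [fdiff_cons, sum_sub_distrib, sum_fdiff_add_cellPoint_eq_zero mm hf u hu hx,
      sum_const, card_univ, ← hN, zero_sub, neg_neg, Nat.cast_smul_eq_nsmul]
  have hterm t : ‖fdiff (Fin.cons (cellPoint mm t) u) f x‖ ≤ d * B * P := by
    refine (h _ (Fin.cases (cellPoint_mem_lattice mm t) hu) x hx).trans ?_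
    rw [Fin.prod_univ_succ, Fin.cons_zero, mul_comm (d : ℝ) B, mul_assoc]
    simp only [Fin.cons_succ]
    gcongr
    exact sum_abs_cellPoint_le mm t
  have hN_pos : (0 : ℝ) < N := Nat.cast_pos.mpr Fintype.card_pos
  refine le_of_mul_le_mul_left ?_ hN_pos
  calc (N : ℝ) * ‖fdiff u f x‖ = ‖∑ t, fdiff (Fin.cons (cellPoint mm t) u) f x‖ := by
        rw [← Real.norm_natCast, ← norm_smul, hsum, norm_neg]
    _ ≤ ∑ _t : ∀ i, ZMod (mm i), d * B * P := norm_sum_le_of_le _ fun t _ => hterm t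
    _ = N * (d * B * P) := by rw [sum_const, card_univ, nsmul_eq_mul]

theorem FdiffBoundedBy.of_add (hf : ∀ q : Fin d → ℤ, Function.Periodic f fun i => (q i : ℝ))
    {B : ℝ} (hB : 0 ≤ B) {m : ℕ} (n : ℕ) (h : FdiffBoundedBy mm f (m + 1 + n) B) :
    FdiffBoundedBy mm f (m + 1) (d ^ n * B) := by
  induction n generalizing m with
  | zero => simpa using h
  | succ n ih =>
    rw [show m + 1 + (n + 1) = m + 1 + 1 + n by omega] at h
    rw [pow_succ', mul_assoc]
    exact (ih h).of_succ hf (by positivity)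

end Bounds

theorem lower_order_differences_bound_general {d : ℕ} {Y : Type*}
    [NormedAddCommGroup Y] [NormedSpace ℝ Y]
    (mm : Fin d → ℕ) (hmm : ∀ i, 0 < mm i) (f : (Fin d → ℝ) → Y)
    (hper : ∀ (x : Fin d → ℝ) (h : Fin d → ℤ), f (x + fun i => (h i : ℝ)) = f x)
    (k : ℕ) (C : ℝ) (hC0 : 0 ≤ C)
    (hC : ∀ (u : Fin (k + 1) → Fin d → ℝ), (∀ i, u i ∈ lattice mm) →
      ∀ x ∈ lattice mm, ‖fdiff u f x‖ ≤ C * ∏ i, ∑ j, |u i j|)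
    (m : ℕ) (hm1 : 1 ≤ m) (hm2 : m ≤ k + 1) :
    ∀ (u : Fin m → Fin d → ℝ), (∀ i, u i ∈ lattice mm) →
      ∀ x ∈ lattice mm,
        ‖fdiff u f x‖ ≤ (d : ℝ) ^ (k + 1 - m) * C * ∏ i, ∑ j, |u i j| := by
  have : ∀ i, NeZero (mm i) := fun i => ⟨(hmm i).ne'⟩
  obtain ⟨m, rfl⟩ : ∃ m', m = m' + 1 := ⟨m - 1, by omega⟩
  have hC' : FdiffBoundedBy mm f (m + 1 + (k + 1 - (m + 1))) C := by
    rwa [show m + 1 + (k + 1 - (m + 1)) = k + 1 by omega]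
  exact FdiffBoundedBy.of_add (fun q x => hper x q) hC0 _ hC'

/-- For a ℤ^d-periodic lattice function, `‖Δ^m f‖_Γ ≤ d^{k+1-m} ‖Δ^{k+1} f‖_Γ`
(sum norm on ℝ^d). -/
theorem lower_order_differences_bound {d : ℕ} {Y : Type*}
    [NormedAddCommGroup Y] [NormedSpace ℝ Y] [CompleteSpace Y]
    (mm : Fin d → ℕ) (hmm : ∀ i, 0 < mm i) (f : (Fin d → ℝ) → Y)
    (hper : ∀ (x : Fin d → ℝ) (h : Fin d → ℤ), f (x + fun i => (h i : ℝ)) = f x)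
    (k : ℕ) (C : ℝ) (hC0 : 0 ≤ C)
    (hC : ∀ (u : Fin (k + 1) → Fin d → ℝ), (∀ i, u i ∈ lattice mm) →
      ∀ x ∈ lattice mm, ‖fdiff u f x‖ ≤ C * ∏ i, ∑ j, |u i j|)
    (m : ℕ) (hm1 : 1 ≤ m) (hm2 : m ≤ k + 1) :
    ∀ (u : Fin m → Fin d → ℝ), (∀ i, u i ∈ lattice mm) →
      ∀ x ∈ lattice mm,
        ‖fdiff u f x‖ ≤ (d : ℝ) ^ (k + 1 - m) * C * ∏ i, ∑ j, |u i j| :=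
  lower_order_differences_bound_general mm hmm f hper k C hC0 hC m hm1 hm2
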